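/- arXiv:2207.02913 — 4 statements merged into one kernel-verified Lean document; each statement's English description precedes it below -/
import Mathlib

section
/- The set U'_{2g}(F_ℓ) of block matrices [[A, μ⁻¹AS],[0, μ(Aᵗ)⁻¹]], with A upper triangular g×g over F_ℓ having all diagonal entries equal to some λ ∈ F_ℓ^×, μ = λ², and S symmetric g×g over F_ℓ, is a normal subgroup of B_{2g}(F_ℓ). -/
open Matrix Polynomial

noncomputable section

/-- The standard symplectic form matrix `J = [[0, I],[-I, 0]]`. -/
def Jmat (ℓ g : ℕ) : Matrix (Fin g ⊕ Fin g) (Fin g ⊕ Fin g) (ZMod ℓ) :=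
  fromBlocks 0 1 (-1) 0

/-- The general symplectic group `GSp_{2g}(F_ℓ)` as a set of matrices:
invertible `M` with `Mᵀ J M = μ J` for some unit `μ` (the multiplicator). -/
def GSpSet (ℓ g : ℕ) : Set (Matrix (Fin g ⊕ Fin g) (Fin g ⊕ Fin g) (ZMod ℓ)) :=
  {M | IsUnit M ∧ ∃ μ : (ZMod ℓ)ˣ, Mᵀ * Jmat ℓ g * M = (μ : ZMod ℓ) • Jmat ℓ g}

/-- `B_{2g}(F_ℓ)`: block matrices `[[A, μ⁻¹AS],[0, μ(Aᵀ)⁻¹]]` with `A` invertible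
upper triangular, `μ ∈ F_ℓˣ` and `S` symmetric. -/
def BSet (ℓ g : ℕ) : Set (Matrix (Fin g ⊕ Fin g) (Fin g ⊕ Fin g) (ZMod ℓ)) :=
  {M | ∃ (A S : Matrix (Fin g) (Fin g) (ZMod ℓ)) (μ : (ZMod ℓ)ˣ),
    A.BlockTriangular id ∧ IsUnit A ∧ S.IsSymm ∧
    M = fromBlocks A (((μ : ZMod ℓ))⁻¹ • (A * S)) 0 ((μ : ZMod ℓ) • (Aᵀ)⁻¹)}

/-- `U_{2g}(F_ℓ)`: block matrices `[[A, AS],[0, (Aᵀ)⁻¹]]` with `A` unipotent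
upper triangular and `S` symmetric. -/
def USet (ℓ g : ℕ) : Set (Matrix (Fin g ⊕ Fin g) (Fin g ⊕ Fin g) (ZMod ℓ)) :=
  {M | ∃ (A S : Matrix (Fin g) (Fin g) (ZMod ℓ)),
    A.BlockTriangular id ∧ (∀ i, A i i = 1) ∧ S.IsSymm ∧
    M = fromBlocks A (A * S) 0 ((Aᵀ)⁻¹)}

/-- `U'_{2g}(F_ℓ)`: block matrices `[[A, μ⁻¹AS],[0, μ(Aᵀ)⁻¹]]` with `A` upper
triangular of constant diagonal `λ ∈ F_ℓˣ`, `μ = λ²`, and `S` symmetric. -/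
def U'Set (ℓ g : ℕ) : Set (Matrix (Fin g ⊕ Fin g) (Fin g ⊕ Fin g) (ZMod ℓ)) :=
  {M | ∃ (A S : Matrix (Fin g) (Fin g) (ZMod ℓ)) (lam : (ZMod ℓ)ˣ),
    A.BlockTriangular id ∧ (∀ i, A i i = (lam : ZMod ℓ)) ∧ S.IsSymm ∧
    M = fromBlocks A ((((lam : ZMod ℓ) ^ 2))⁻¹ • (A * S)) 0
      (((lam : ZMod ℓ) ^ 2) • (Aᵀ)⁻¹)}

/-- `T_{2g}(F_ℓ)`: block diagonal matrices `diag(A, μ(Aᵀ)⁻¹)` with `A` an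
invertible diagonal matrix and `μ ∈ F_ℓˣ`. -/
def TSet (ℓ g : ℕ) : Set (Matrix (Fin g ⊕ Fin g) (Fin g ⊕ Fin g) (ZMod ℓ)) :=
  {M | ∃ (d : Fin g → (ZMod ℓ)ˣ) (μ : (ZMod ℓ)ˣ),
    M = fromBlocks (diagonal fun i => (d i : ZMod ℓ)) 0 0
      ((μ : ZMod ℓ) • diagonal fun i => (((d i)⁻¹ : (ZMod ℓ)ˣ) : ZMod ℓ))}

/-!
A product of blocks `[[A, c⁻¹AS], [0, c(Aᵀ)⁻¹]]` is again such a block, with matrix `A₁A₂`,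
multiplier `ab` and symmetric part `a S₂ + b² A₂⁻¹ S₁ A₂⁻ᵀ`; inverting a block inverts `A` and `c`.
The diagonal of an upper triangular matrix is multiplicative, so `A₁A₂A₁⁻¹` has the constant
diagonal `λ` of `A₂`, while the multiplier of a conjugate is `c λ² c⁻¹ = λ²`.
-/

namespace Matrix

variable {n R : Type*} [CommRing R]

theorem IsSymm.mul_mul_transpose {m : Type*} [Fintype m] {S : Matrix m m R} (hS : S.IsSymm)
    (B : Matrix n m R) : (B * S * Bᵀ).IsSymm := by
  rw [IsSymm, transpose_mul, transpose_mul, transpose_transpose, hS.eq, Matrix.mul_assoc]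

section Triangular

variable [Fintype n] [LinearOrder n] {A B : Matrix n n R}

theorem IsUpperTriangular.mul_apply_self (hA : A.IsUpperTriangular) (hB : B.IsUpperTriangular)
    (i : n) : (A * B) i i = A i i * B i i := by
  rw [mul_apply, Finset.sum_eq_single i]
  · intro j _ hji
    rcases hji.lt_or_gt with h | h
    · rw [hA h, zero_mul]
    · rw [hB h, mul_zero]
  · simp

variable [DecidableEq n]

theorem IsUpperTriangular.isUnit_of_diag_eq (hA : A.IsUpperTriangular) (u : Rˣ)
    (hd : ∀ i, A i i = u) : IsUnit A := by
  rw [isUnit_iff_isUnit_det, det_of_isUpperTriangular hA, Finset.prod_congr rfl fun i _ => hd i,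
    Finset.prod_const]
  exact u.isUnit.pow _

theorem IsUpperTriangular.inv (hA : A.IsUpperTriangular) : A⁻¹.IsUpperTriangular := by
  by_cases hu : IsUnit A.det
  · have := invertibleOfIsUnitDet A hu
    exact blockTriangular_inv_of_blockTriangular hA
  · rw [nonsing_inv_apply_not_isUnit A hu]
    exact blockTriangular_zero

theorem IsUpperTriangular.mul_inv_apply_self (hA : A.IsUpperTriangular) (hu : IsUnit A) (i : n) :
    A i i * A⁻¹ i i = 1 := by
  rw [← hA.mul_apply_self hA.inv, mul_nonsing_inv A ((isUnit_iff_isUnit_det A).mp hu),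
    one_apply_eq]

end Triangular

variable [Fintype n] [DecidableEq n]

def borelBlock (A S : Matrix n n R) (c : Rˣ) : Matrix (n ⊕ n) (n ⊕ n) R :=
  fromBlocks A ((↑c⁻¹ : R) • (A * S)) 0 ((c : R) • Aᵀ⁻¹)

theorem borelBlock_one : borelBlock (1 : Matrix n n R) 0 1 = 1 := by
  simp [borelBlock]

theorem borelBlock_mul (A₁ S₁ A₂ S₂ : Matrix n n R) (a b : Rˣ) (hA₂ : IsUnit A₂) :
    borelBlock A₁ S₁ a * borelBlock A₂ S₂ b =
      borelBlock (A₁ * A₂) ((a : R) • S₂ + ((b : R) ^ 2) • (A₂⁻¹ * S₁ * A₂⁻¹ᵀ)) (a * b) := by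
  have hA₂_mul_inv : A₂ * A₂⁻¹ = 1 := mul_nonsing_inv A₂ ((isUnit_iff_isUnit_det A₂).mp hA₂)
  have hcancel : A₁ * A₂ * (A₂⁻¹ * S₁ * A₂ᵀ⁻¹) = A₁ * S₁ * A₂ᵀ⁻¹ := by
    rw [Matrix.mul_assoc, ← Matrix.mul_assoc A₂, ← Matrix.mul_assoc A₂, hA₂_mul_inv,
      Matrix.one_mul, Matrix.mul_assoc]
  simp only [borelBlock, fromBlocks_multiply, Matrix.mul_zero, Matrix.zero_mul, add_zero,
    zero_add, transpose_mul, mul_inv_rev, transpose_nonsing_inv]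
  congr 1
  · rw [Matrix.mul_add, Matrix.mul_smul (A₁ * A₂), Matrix.mul_smul (A₁ * A₂), hcancel,
      Matrix.mul_assoc A₁ A₂ S₂]
    simp only [Matrix.mul_smul, Matrix.smul_mul]
    match_scalars <;> simp [mul_assoc, mul_left_comm, pow_two]
  · rw [Matrix.smul_mul, Matrix.mul_smul, smul_smul, Units.val_mul]

theorem borelBlock_inv (A S : Matrix n n R) (c : Rˣ) (hA : IsUnit A) :
    (borelBlock A S c)⁻¹ = borelBlock A⁻¹ (-((↑c⁻¹ : R) ^ 3) • (A * S * Aᵀ)) c⁻¹ := by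
  have hdet : IsUnit A.det := (isUnit_iff_isUnit_det A).mp hA
  apply inv_eq_right_inv
  rw [borelBlock_mul _ _ _ _ _ _ (isUnit_nonsing_inv_iff.mpr hA), mul_nonsing_inv A hdet,
    nonsing_inv_nonsing_inv A hdet, mul_inv_cancel, ← borelBlock_one]
  congr 1
  rw [smul_smul, ← add_smul]
  convert zero_smul R (A * S * Aᵀ)
  linear_combination (-(↑c⁻¹ : R) ^ 2) * c.mul_inv

theorem exists_isSymm_borelBlock_mul {A₁ S₁ A₂ S₂ : Matrix n n R} (hS₁ : S₁.IsSymm)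
    (hS₂ : S₂.IsSymm) (hA₂ : IsUnit A₂) (a b : Rˣ) :
    ∃ S, S.IsSymm ∧ borelBlock A₁ S₁ a * borelBlock A₂ S₂ b = borelBlock (A₁ * A₂) S (a * b) :=
  ⟨_, (hS₂.smul _).add ((hS₁.mul_mul_transpose _).smul _), borelBlock_mul _ _ _ _ _ _ hA₂⟩

theorem exists_isSymm_borelBlock_inv {A S : Matrix n n R} (hS : S.IsSymm) (hA : IsUnit A)
    (c : Rˣ) : ∃ S', S'.IsSymm ∧ (borelBlock A S c)⁻¹ = borelBlock A⁻¹ S' c⁻¹ :=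
  ⟨_, (hS.mul_mul_transpose _).smul _, borelBlock_inv _ _ _ hA⟩

variable (n R) [LinearOrder n]

def borelSet : Set (Matrix (n ⊕ n) (n ⊕ n) R) :=
  {M | ∃ (A S : Matrix n n R) (c : Rˣ),
    A.IsUpperTriangular ∧ IsUnit A ∧ S.IsSymm ∧ M = borelBlock A S c}

def constDiagBorelSet : Set (Matrix (n ⊕ n) (n ⊕ n) R) :=
  {M | ∃ (A S : Matrix n n R) (u : Rˣ),
    A.IsUpperTriangular ∧ (∀ i, A i i = u) ∧ S.IsSymm ∧ M = borelBlock A S (u ^ 2)}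

variable {n R}

theorem constDiagBorelSet_subset_borelSet : constDiagBorelSet n R ⊆ borelSet n R := by
  rintro M ⟨A, S, u, hA, hdiag, hS, rfl⟩
  exact ⟨A, S, u ^ 2, hA, hA.isUnit_of_diag_eq u hdiag, hS, rfl⟩

theorem one_mem_constDiagBorelSet : 1 ∈ constDiagBorelSet n R :=
  ⟨1, 0, 1, blockTriangular_one, fun i => by simp, isSymm_zero, by simp [borelBlock_one]⟩

theorem mul_mem_constDiagBorelSet {M N : Matrix (n ⊕ n) (n ⊕ n) R}
    (hM : M ∈ constDiagBorelSet n R) (hN : N ∈ constDiagBorelSet n R) :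
    M * N ∈ constDiagBorelSet n R := by
  obtain ⟨A₁, S₁, u₁, hA₁, hdiag₁, hS₁, rfl⟩ := hM
  obtain ⟨A₂, S₂, u₂, hA₂, hdiag₂, hS₂, rfl⟩ := hN
  obtain ⟨S, hS, hmul⟩ :=
    exists_isSymm_borelBlock_mul hS₁ hS₂ (hA₂.isUnit_of_diag_eq u₂ hdiag₂) (u₁ ^ 2) (u₂ ^ 2)
  refine ⟨A₁ * A₂, S, u₁ * u₂, hA₁.mul hA₂, fun i => ?_, hS, by rw [hmul, mul_pow]⟩
  rw [hA₁.mul_apply_self hA₂, hdiag₁, hdiag₂, Units.val_mul]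

theorem inv_mem_constDiagBorelSet {M : Matrix (n ⊕ n) (n ⊕ n) R}
    (hM : M ∈ constDiagBorelSet n R) : M⁻¹ ∈ constDiagBorelSet n R := by
  obtain ⟨A, S, u, hA, hdiag, hS, rfl⟩ := hM
  have hAunit := hA.isUnit_of_diag_eq u hdiag
  obtain ⟨S', hS', hinv⟩ := exists_isSymm_borelBlock_inv hS hAunit (u ^ 2)
  refine ⟨A⁻¹, S', u⁻¹, hA.inv, fun i => ?_, hS', by rw [hinv, inv_pow]⟩
  have h := hA.mul_inv_apply_self hAunit i
  rw [hdiag] at h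
  exact Units.eq_inv_of_mul_eq_one_left h

theorem conj_mem_constDiagBorelSet {B M : Matrix (n ⊕ n) (n ⊕ n) R}
    (hB : B ∈ borelSet n R) (hM : M ∈ constDiagBorelSet n R) :
    B * M * B⁻¹ ∈ constDiagBorelSet n R := by
  obtain ⟨A₁, S₁, c, hA₁, hA₁unit, hS₁, rfl⟩ := hB
  obtain ⟨A₂, S₂, u, hA₂, hdiag, hS₂, rfl⟩ := hM
  obtain ⟨T, hT, hinv⟩ := exists_isSymm_borelBlock_inv hS₁ hA₁unit c
  obtain ⟨S₃, hS₃, hmul⟩ :=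
    exists_isSymm_borelBlock_mul hS₁ hS₂ (hA₂.isUnit_of_diag_eq u hdiag) c (u ^ 2)
  obtain ⟨S₄, hS₄, hconj⟩ :=
    exists_isSymm_borelBlock_mul hS₃ hT (isUnit_nonsing_inv_iff.mpr hA₁unit) (c * u ^ 2) c⁻¹
  refine ⟨A₁ * A₂ * A₁⁻¹, S₄, u, (hA₁.mul hA₂).mul hA₁.inv, fun i => ?_, hS₄, ?_⟩
  · rw [IsUpperTriangular.mul_apply_self (hA₁.mul hA₂) hA₁.inv, hA₁.mul_apply_self hA₂, hdiag,
      mul_right_comm, hA₁.mul_inv_apply_self hA₁unit, one_mul]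
  · rw [hinv, hmul, hconj, mul_comm c, mul_inv_cancel_right]

end Matrix

theorem BSet_eq_borelSet (ℓ g : ℕ) : BSet ℓ g = borelSet (Fin g) (ZMod ℓ) := by
  ext M
  simp only [BSet, borelSet, borelBlock, ZMod.inv_coe_unit]

theorem U'Set_eq_constDiagBorelSet (ℓ g : ℕ) :
    U'Set ℓ g = constDiagBorelSet (Fin g) (ZMod ℓ) := by
  ext M
  simp only [U'Set, constDiagBorelSet, borelBlock, ← Units.val_pow_eq_pow_val, ZMod.inv_coe_unit]

theorem stmt2_general (ℓ g : ℕ) :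
    U'Set ℓ g ⊆ BSet ℓ g ∧
    (1 : Matrix (Fin g ⊕ Fin g) (Fin g ⊕ Fin g) (ZMod ℓ)) ∈ U'Set ℓ g ∧
    (∀ M ∈ U'Set ℓ g, ∀ N ∈ U'Set ℓ g, M * N ∈ U'Set ℓ g) ∧
    (∀ M ∈ U'Set ℓ g, M⁻¹ ∈ U'Set ℓ g) ∧
    (∀ B ∈ BSet ℓ g, ∀ M ∈ U'Set ℓ g, B * M * B⁻¹ ∈ U'Set ℓ g) := by
  rw [BSet_eq_borelSet, U'Set_eq_constDiagBorelSet]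
  exact ⟨constDiagBorelSet_subset_borelSet, one_mem_constDiagBorelSet,
    fun _ hM _ hN => mul_mem_constDiagBorelSet hM hN, fun _ hM => inv_mem_constDiagBorelSet hM,
    fun _ hB _ hM => conj_mem_constDiagBorelSet hB hM⟩

/-- `U'_{2g}(F_ℓ)` is a normal subgroup of `B_{2g}(F_ℓ)`: it is contained in
`B_{2g}(F_ℓ)`, contains the identity, is closed under multiplication and
inverses, and is stable under conjugation by elements of `B_{2g}(F_ℓ)`. -/
theorem stmt2 (ℓ g : ℕ) [Fact ℓ.Prime] (hg : 1 ≤ g) :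
    U'Set ℓ g ⊆ BSet ℓ g ∧
    (1 : Matrix (Fin g ⊕ Fin g) (Fin g ⊕ Fin g) (ZMod ℓ)) ∈ U'Set ℓ g ∧
    (∀ M ∈ U'Set ℓ g, ∀ N ∈ U'Set ℓ g, M * N ∈ U'Set ℓ g) ∧
    (∀ M ∈ U'Set ℓ g, M⁻¹ ∈ U'Set ℓ g) ∧
    (∀ B ∈ BSet ℓ g, ∀ M ∈ U'Set ℓ g, B * M * B⁻¹ ∈ U'Set ℓ g) :=
  stmt2_general ℓ g
end
end

section
/- For a prime ℓ with ℓ ∤ 2g and any integer t, the set C^{ss}(ℓ,t) of semisimple matrices M in GSp_{2g}(F_ℓ) having all eigenvalues in F_ℓ^× and trace equal to -t mod ℓ is nonempty. -/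
/-!
Take the diagonal matrix `diag(c, …, c, d, …, d)` (each entry `g` times) with `c, d ≠ 0` and
`c + d = -t / g`, which we can divide by since `ℓ ∤ g`. It is symplectic with multiplier `c d`,
semisimple, its eigenvalues `c, d` are nonzero, and its trace is `g (c + d) = -t`. Nonzero `c, d`
with a prescribed sum exist because `ℓ ≠ 2`: take `(1, s - 1)`, or `(-1, 2)` when `s = 1`.
-/


open Matrix Polynomial

noncomputable section

/-- `C^{ss}(ℓ,t)`: semisimple elements of `GSp_{2g}(F_ℓ)` (squarefree minimal
polynomial, equivalently distinct roots in the algebraic closure) with all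
eigenvalues in `F_ℓˣ` (the characteristic polynomial splits over `F_ℓ` with
nonzero roots) and trace `-t mod ℓ`. -/
def CssSet (ℓ g : ℕ) [Fact ℓ.Prime] (t : ℤ) :
    Set (Matrix (Fin g ⊕ Fin g) (Fin g ⊕ Fin g) (ZMod ℓ)) :=
  {M | M ∈ GSpSet ℓ g ∧ Squarefree (minpoly (ZMod ℓ) M) ∧
    (Matrix.charpoly M).Splits ∧
    (∀ x ∈ (Matrix.charpoly M).roots, x ≠ 0) ∧
    Matrix.trace M = -(t : ZMod ℓ)}

open Finset

namespace Matrix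

variable {n : Type*} [Fintype n] [DecidableEq n]

theorem aeval_diagonal {R : Type*} [CommRing R] (v : n → R) (p : R[X]) :
    aeval (diagonal v) p = diagonal fun i => p.eval (v i) := by
  rw [← diagonalAlgHom_apply (R := R), aeval_algHom_apply, aeval_pi_apply]
  simp

theorem squarefree_minpoly_diagonal {K : Type*} [Field K] (v : n → K) :
    Squarefree (minpoly K (diagonal v)) := by
  classical
  set p := ∏ x ∈ univ.image v, (X - C x)
  have hsep : p.Separable := separable_prod_X_sub_C_iff'.2 fun _ _ _ _ h => h
  have hp : aeval (diagonal v) p = 0 := by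
    rw [aeval_diagonal, ← diagonal_zero]
    congr 1
    ext i
    rw [eval_prod]
    exact Finset.prod_eq_zero (mem_image_of_mem v (mem_univ i)) (by simp)
  exact hsep.squarefree.squarefree_of_dvd (minpoly.dvd K _ hp)

theorem splits_charpoly_diagonal {R : Type*} [CommRing R] (v : n → R) :
    (diagonal v).charpoly.Splits := by
  rw [charpoly_diagonal]
  exact Splits.prod fun i _ => Splits.X_sub_C _

theorem roots_charpoly_diagonal {R : Type*} [CommRing R] [IsDomain R] (v : n → R) :
    (diagonal v).charpoly.roots = univ.val.map v := by
  rw [charpoly_diagonal, prod_eq_multiset_prod, ← roots_multiset_prod_X_sub_C (univ.val.map v),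
    Multiset.map_map]
  rfl

end Matrix

theorem exists_ne_zero_ne_zero_add_eq {R : Type*} [Ring R] [Nontrivial R] (h2 : (2 : R) ≠ 0)
    (s : R) : ∃ c d : R, c ≠ 0 ∧ d ≠ 0 ∧ c + d = s := by
  by_cases hs : s = 1
  · exact ⟨-1, 2, neg_ne_zero.2 one_ne_zero, h2, by rw [hs]; norm_num⟩
  · exact ⟨1, s - 1, one_ne_zero, sub_ne_zero.2 hs, add_sub_cancel _ _⟩

theorem diagonal_sumElim_mem_GSpSet {ℓ g : ℕ} (a b : Fin g → ZMod ℓ) (μ : (ZMod ℓ)ˣ)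
    (hab : ∀ i, a i * b i = μ) : diagonal (Sum.elim a b) ∈ GSpSet ℓ g := by
  refine ⟨?_, μ, ?_⟩
  · rw [isUnit_iff_isUnit_det, det_diagonal, Fintype.prod_sum_type, ← prod_mul_distrib]
    simp only [Sum.elim_inl, Sum.elim_inr, hab, prod_const]
    exact μ.isUnit.pow _
  · ext (i | i) (j | j) <;> simp [Jmat, diagonal_transpose, one_apply]
      <;> split_ifs with hij <;> simp [hij, hab, mul_comm]

theorem stmt8_general (ℓ g : ℕ) [Fact ℓ.Prime] (h2g : ¬ ℓ ∣ 2 * g)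
    (t : ℤ) : (CssSet ℓ g t).Nonempty := by
  have h2g' : (2 : ZMod ℓ) * g ≠ 0 := by
    exact_mod_cast (ZMod.natCast_eq_zero_iff _ _).not.mpr h2g
  obtain ⟨h2, hg⟩ := mul_ne_zero_iff.mp h2g'
  obtain ⟨c, d, hc, hd, hcd⟩ := exists_ne_zero_ne_zero_add_eq h2 (-(t : ZMod ℓ) / g)
  set v : Fin g ⊕ Fin g → ZMod ℓ := Sum.elim (fun _ => c) (fun _ => d)
  refine ⟨diagonal v, diagonal_sumElim_mem_GSpSet _ _ (Units.mk0 _ (mul_ne_zero hc hd))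
    (fun _ => rfl), squarefree_minpoly_diagonal v, splits_charpoly_diagonal v, ?_, ?_⟩
  · rw [roots_charpoly_diagonal]
    rintro x hx rfl
    obtain ⟨i | i, -, hi⟩ := Multiset.mem_map.mp hx
    exacts [hc hi, hd hi]
  · rw [trace_diagonal, Fintype.sum_sum_type]
    simp only [v, Sum.elim_inl, Sum.elim_inr, sum_const, card_univ, Fintype.card_fin, nsmul_eq_mul]
    rw [← mul_add, hcd, mul_div_cancel₀ _ hg]

/-- For a prime `ℓ ∤ 2g` and any integer `t`, the set `C^{ss}(ℓ,t)` is
nonempty. -/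
theorem stmt8 (ℓ g : ℕ) [Fact ℓ.Prime] (hg : 1 ≤ g) (h2g : ¬ ℓ ∣ 2 * g)
    (t : ℤ) : (CssSet ℓ g t).Nonempty :=
  stmt8_general ℓ g h2g t
end
end

section
/- For M₁ ∈ U_{2g}(F_ℓ) and M₂ ∈ B_{2g}(F_ℓ) with trace(M₂) = -t mod ℓ, the product M₁M₂ lies in B_{2g}(F_ℓ) and has trace equal to -t mod ℓ. -/
open Matrix Polynomial

noncomputable section

/-
`B_{2g}` is closed under multiplication (it is the Borel subgroup of `GSp_{2g}`) and contains
`U_{2g}`. For the trace, both diagonal blocks of `M₁M₂` are products of upper (resp. lower)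
triangular matrices, and those coming from `M₁` have all diagonal entries `1`; hence the diagonal
of `M₁M₂` is that of `M₂`.
-/

lemma Matrix.trace_fromBlocks {m R : Type*} [Fintype m] [AddCommMonoid R]
    (A B C D : Matrix m m R) : trace (fromBlocks A B C D) = trace A + trace D := by
  simp [trace, Fintype.sum_sum_type]

lemma Matrix.BlockTriangular.inv {m α R : Type*} [Fintype m] [DecidableEq m] [LinearOrder α]
    [CommRing R] {b : m → α} {M : Matrix m m R} (hM : M.BlockTriangular b) :
    M⁻¹.BlockTriangular b := by
  by_cases h : IsUnit M.det
  · have := M.invertibleOfIsUnitDet h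
    exact blockTriangular_inv_of_blockTriangular hM
  · rw [nonsing_inv_apply_not_isUnit M h]
    exact blockTriangular_zero

namespace Matrix

variable {n R : Type*} [Fintype n] [LinearOrder n]

lemma BlockTriangular.mul_apply_self [NonUnitalNonAssocSemiring R] {X Y : Matrix n n R}
    (hX : X.BlockTriangular id) (hY : Y.BlockTriangular id) (i : n) :
    (X * Y) i i = X i i * Y i i := by
  rw [mul_apply]
  refine Finset.sum_eq_single i (fun k _ hk => ?_) (by simp)
  rcases hk.lt_or_gt with h | h
  · rw [hX h, zero_mul]
  · rw [hY h, mul_zero]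

lemma trace_mul_of_unitriangular [NonAssocSemiring R] {N A : Matrix n n R}
    (hN : N.BlockTriangular id) (hN1 : ∀ i, N i i = 1) (hA : A.BlockTriangular id) :
    trace (N * A) = trace A :=
  Finset.sum_congr rfl fun i _ => by simp [hN.mul_apply_self hA, hN1]

variable [DecidableEq n] [CommRing R] {N A : Matrix n n R}

lemma isUnit_det_of_unitriangular (hN : N.BlockTriangular id) (hN1 : ∀ i, N i i = 1) :
    IsUnit N.det := by
  simp [det_of_isUpperTriangular hN, hN1]

lemma inv_apply_self_of_unitriangular (hN : N.BlockTriangular id) (hN1 : ∀ i, N i i = 1)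
    (i : n) : N⁻¹ i i = 1 := by
  have h := hN.inv.mul_apply_self hN i
  rwa [nonsing_inv_mul _ (isUnit_det_of_unitriangular hN hN1), hN1, mul_one, one_apply_eq,
    eq_comm] at h

lemma trace_inv_transpose_mul_of_unitriangular (hN : N.BlockTriangular id)
    (hN1 : ∀ i, N i i = 1) (hA : A.BlockTriangular id) :
    trace (Nᵀ⁻¹ * Aᵀ⁻¹) = trace Aᵀ⁻¹ := by
  rw [← transpose_nonsing_inv, ← transpose_nonsing_inv, ← transpose_mul, trace_transpose,
    trace_transpose, trace_mul_comm,
    trace_mul_of_unitriangular hN.inv (inv_apply_self_of_unitriangular hN hN1) hA.inv]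

end Matrix

lemma USet_subset_BSet (ℓ g : ℕ) : USet ℓ g ⊆ BSet ℓ g := by
  rintro _ ⟨A, S, hA, hA1, hS, rfl⟩
  exact ⟨A, S, 1, hA, (isUnit_iff_isUnit_det A).mpr (isUnit_det_of_unitriangular hA hA1), hS,
    by simp⟩

lemma mul_mem_BSet {ℓ g : ℕ} {M₁ M₂ : Matrix (Fin g ⊕ Fin g) (Fin g ⊕ Fin g) (ZMod ℓ)}
    (h₁ : M₁ ∈ BSet ℓ g) (h₂ : M₂ ∈ BSet ℓ g) : M₁ * M₂ ∈ BSet ℓ g := by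
  obtain ⟨A₁, S₁, μ₁, hA₁, hA₁u, hS₁, rfl⟩ := h₁
  obtain ⟨A₂, S₂, μ₂, hA₂, hA₂u, hS₂, rfl⟩ := h₂
  -- The upper right block of the product is `μ₂⁻¹ A₁A₂S₂ + μ₁⁻¹μ₂ A₁S₁(A₂ᵀ)⁻¹`.
  refine ⟨A₁ * A₂, (μ₁ : ZMod ℓ) • S₂ + (μ₂ : ZMod ℓ) ^ 2 • (A₂⁻¹ * S₁ * A₂⁻¹ᵀ), μ₁ * μ₂,
    hA₁.mul hA₂, hA₁u.mul hA₂u, ?_, ?_⟩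
  · simp only [IsSymm, transpose_add, transpose_smul, transpose_mul, transpose_transpose,
      hS₁.eq, hS₂.eq, Matrix.mul_assoc]
  have hcancel : A₁ * A₂ * (A₂⁻¹ * S₁ * A₂ᵀ⁻¹) = A₁ * S₁ * A₂ᵀ⁻¹ := by
    simp only [Matrix.mul_assoc,
      mul_nonsing_inv_cancel_left _ _ ((isUnit_iff_isUnit_det A₂).mp hA₂u)]
  simp only [fromBlocks_multiply, Matrix.zero_mul, Matrix.mul_zero, add_zero, smul_zero,
    zero_add, ZMod.inv_coe_unit, transpose_mul, Matrix.mul_inv_rev, Matrix.mul_smul,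
    Matrix.smul_mul, Matrix.mul_add, smul_add, smul_smul, transpose_nonsing_inv, hcancel,
    ← Matrix.mul_assoc A₁ A₂ S₂]
  congr 1
  · congr 2
    · rw [← Units.val_mul, _root_.mul_inv_rev, inv_mul_cancel_right]
    · rw [← Units.val_pow_eq_pow_val, ← Units.val_mul, ← Units.val_mul, mul_inv, pow_two,
        mul_mul_mul_comm, inv_mul_cancel, mul_one, mul_comm]
  · rw [Units.val_mul, mul_comm]

lemma trace_mul_of_mem_USet {ℓ g : ℕ} {M₁ M₂ : Matrix (Fin g ⊕ Fin g) (Fin g ⊕ Fin g) (ZMod ℓ)}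
    (h₁ : M₁ ∈ USet ℓ g) (h₂ : M₂ ∈ BSet ℓ g) : trace (M₁ * M₂) = trace M₂ := by
  obtain ⟨A₁, S₁, hA₁, hA₁1, -, rfl⟩ := h₁
  obtain ⟨A₂, S₂, μ, hA₂, -, -, rfl⟩ := h₂
  simp only [fromBlocks_multiply, Matrix.zero_mul, Matrix.mul_zero, add_zero, smul_zero,
    zero_add, trace_fromBlocks, Matrix.mul_smul, trace_smul,
    trace_mul_of_unitriangular hA₁ hA₁1 hA₂,
    trace_inv_transpose_mul_of_unitriangular hA₁ hA₁1 hA₂]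

theorem stmt11_general (ℓ g : ℕ) (t : ℤ)
    (M₁ M₂ : Matrix (Fin g ⊕ Fin g) (Fin g ⊕ Fin g) (ZMod ℓ))
    (h₁ : M₁ ∈ USet ℓ g) (h₂ : M₂ ∈ BSet ℓ g)
    (htr : Matrix.trace M₂ = -(t : ZMod ℓ)) :
    M₁ * M₂ ∈ BSet ℓ g ∧ Matrix.trace (M₁ * M₂) = -(t : ZMod ℓ) :=
  ⟨mul_mem_BSet (USet_subset_BSet ℓ g h₁) h₂, (trace_mul_of_mem_USet h₁ h₂).trans htr⟩

/-- For `M₁ ∈ U_{2g}(F_ℓ)` and `M₂ ∈ B_{2g}(F_ℓ)` with `trace M₂ = -t mod ℓ`,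
the product `M₁M₂` lies in `B_{2g}(F_ℓ)` and has trace `-t mod ℓ`. -/
theorem stmt11 (ℓ g : ℕ) [Fact ℓ.Prime] (hg : 1 ≤ g) (t : ℤ)
    (M₁ M₂ : Matrix (Fin g ⊕ Fin g) (Fin g ⊕ Fin g) (ZMod ℓ))
    (h₁ : M₁ ∈ USet ℓ g) (h₂ : M₂ ∈ BSet ℓ g)
    (htr : Matrix.trace M₂ = -(t : ZMod ℓ)) :
    M₁ * M₂ ∈ BSet ℓ g ∧ Matrix.trace (M₁ * M₂) = -(t : ZMod ℓ) :=
  stmt11_general ℓ g t M₁ M₂ h₁ h₂ htr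
end
end

section
/- The number of conjugacy classes of PGSp_{2g}(F_ℓ) is at most (2g/(ℓ-1)) times the number of conjugacy classes of GSp_{2g}(F_ℓ). More precisely, every Λ_{2g}(F_ℓ)-orbit on the set of conjugacy classes of GSp_{2g}(F_ℓ) under scalar multiplication has size at least (ℓ-1)/(2g). -/
/-!
If a scalar `b` fixes the class of `M`, then `bM` is conjugate to `M`, and comparing determinants
gives `b ^ (2g) = 1`. So the stabiliser of every class in `F_ℓˣ` lies in the group of `2g`-th
roots of unity, which has at most `2g` elements, and orbit–stabiliser makes every orbit at least
`(ℓ - 1)/(2g)` large. The orbits partition the classes, which bounds their number.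
-/

open Matrix Polynomial

noncomputable section

/-- The conjugacy class of `M` in `GSp_{2g}(F_ℓ)`. -/
def conjClass (ℓ g : ℕ) (M : Matrix (Fin g ⊕ Fin g) (Fin g ⊕ Fin g) (ZMod ℓ)) :
    Set (Matrix (Fin g ⊕ Fin g) (Fin g ⊕ Fin g) (ZMod ℓ)) :=
  {X | ∃ N ∈ GSpSet ℓ g, X = N * M * N⁻¹}

/-- The set of conjugacy classes of `GSp_{2g}(F_ℓ)`. -/
def GSpClasses (ℓ g : ℕ) :
    Set (Set (Matrix (Fin g ⊕ Fin g) (Fin g ⊕ Fin g) (ZMod ℓ))) :=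
  {C | ∃ M ∈ GSpSet ℓ g, C = conjClass ℓ g M}

/-- The orbit of a conjugacy class `C` of `GSp_{2g}(F_ℓ)` under the action of
the scalar matrices `Λ_{2g}(F_ℓ) ≃ F_ℓˣ` by `b • C = {bM : M ∈ C}`. -/
def lambdaOrbit (ℓ g : ℕ)
    (C : Set (Matrix (Fin g ⊕ Fin g) (Fin g ⊕ Fin g) (ZMod ℓ))) :
    Set (Set (Matrix (Fin g ⊕ Fin g) (Fin g ⊕ Fin g) (ZMod ℓ))) :=
  {C' | ∃ b : (ZMod ℓ)ˣ, C' = (fun X => (b : ZMod ℓ) • X) '' C}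

/-- The conjugacy classes of `PGSp_{2g}(F_ℓ)`, viewed (as in the paper) as the
`Λ_{2g}(F_ℓ)`-orbits of conjugacy classes of `GSp_{2g}(F_ℓ)`. -/
def PGSpClasses (ℓ g : ℕ) :
    Set (Set (Set (Matrix (Fin g ⊕ Fin g) (Fin g ⊕ Fin g) (ZMod ℓ)))) :=
  {O | ∃ C ∈ GSpClasses ℓ g, O = lambdaOrbit ℓ g C}


open Pointwise MulAction

theorem Matrix.pow_card_eq_one_of_smul_eq_conj {n R : Type*} [Fintype n] [DecidableEq n]
    [CommRing R] {M N : Matrix n n R} {b : R} (hM : IsUnit M.det) (hN : IsUnit N)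
    (h : b • M = N * M * N⁻¹) : b ^ Fintype.card n = 1 := by
  have hdet := congrArg det h
  rw [det_smul, det_conj hN] at hdet
  exact hM.mul_right_cancel (hdet.trans (one_mul _).symm)

theorem MulAction.card_le_mul_ncard_orbit_of_stabilizer_le {G α : Type*} [Group G]
    [MulAction G α] {x : α} {H : Subgroup G} [Finite H] (h : stabilizer G x ≤ H) :
    Nat.card G ≤ Nat.card H * (orbit G x).ncard := by
  rw [← index_stabilizer, ← (stabilizer G x).card_mul_index]
  exact Nat.mul_le_mul_right _ (Subgroup.card_le_of_le h)

theorem MulAction.mul_ncard_image_orbit_le {G α : Type*} [Group G] [MulAction G α]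
    {S : Set α} (hS : S.Finite) (hinv : ∀ g : G, ∀ x ∈ S, g • x ∈ S) {n k : ℕ}
    (h : ∀ x ∈ S, n ≤ k * (orbit G x).ncard) :
    n * (orbit G '' S).ncard ≤ k * S.ncard := by
  classical
  lift S to Finset α using hS
  have hfiber : ∀ x ∈ S, {y ∈ S | orbit G y = orbit G x} = orbit G x := by
    intro x hx
    ext y
    simp only [Finset.coe_filter, orbit_eq_iff]
    refine ⟨And.right, ?_⟩
    rintro ⟨g, rfl⟩
    exact ⟨hinv g x hx, g, rfl⟩
  rw [← Finset.coe_image, Set.ncard_coe_finset, Set.ncard_coe_finset,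
    Finset.card_eq_sum_card_image (orbit G) S, Finset.mul_sum, mul_comm, ← smul_eq_mul,
    ← Finset.sum_const]
  refine Finset.sum_le_sum fun O hO => ?_
  obtain ⟨x, hx, rfl⟩ := Finset.mem_image.mp hO
  rw [← Set.ncard_coe_finset, hfiber x hx]
  exact h x hx

section

variable {ℓ g : ℕ}

theorem smul_mem_GSpSet (b : (ZMod ℓ)ˣ) {M : Matrix (Fin g ⊕ Fin g) (Fin g ⊕ Fin g) (ZMod ℓ)}
    (hM : M ∈ GSpSet ℓ g) : b • M ∈ GSpSet ℓ g := by
  obtain ⟨hMu, μ, hμ⟩ := hM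
  refine ⟨hMu.smul b, b ^ 2 * μ, ?_⟩
  rw [Units.smul_def, transpose_smul, Matrix.smul_mul, Matrix.mul_smul, Matrix.smul_mul, hμ,
    smul_smul, smul_smul]
  push_cast
  ring_nf

theorem one_mem_GSpSet : (1 : Matrix (Fin g ⊕ Fin g) (Fin g ⊕ Fin g) (ZMod ℓ)) ∈ GSpSet ℓ g :=
  ⟨isUnit_one, 1, by simp⟩

theorem mem_conjClass_self (M : Matrix (Fin g ⊕ Fin g) (Fin g ⊕ Fin g) (ZMod ℓ)) :
    M ∈ conjClass ℓ g M :=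
  ⟨1, one_mem_GSpSet, by simp⟩

theorem smul_conjClass (b : (ZMod ℓ)ˣ) (M : Matrix (Fin g ⊕ Fin g) (Fin g ⊕ Fin g) (ZMod ℓ)) :
    b • conjClass ℓ g M = conjClass ℓ g (b • M) := by
  ext X
  simp only [← Set.image_smul, conjClass, Set.mem_image]
  constructor
  · rintro ⟨_, ⟨N, hN, rfl⟩, rfl⟩
    exact ⟨N, hN, by rw [mul_smul_comm, smul_mul_assoc]⟩
  · rintro ⟨N, hN, rfl⟩
    exact ⟨_, ⟨N, hN, rfl⟩, by rw [mul_smul_comm, smul_mul_assoc]⟩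

theorem smul_mem_GSpClasses (b : (ZMod ℓ)ˣ)
    {C : Set (Matrix (Fin g ⊕ Fin g) (Fin g ⊕ Fin g) (ZMod ℓ))} (hC : C ∈ GSpClasses ℓ g) :
    b • C ∈ GSpClasses ℓ g := by
  obtain ⟨M, hM, rfl⟩ := hC
  exact ⟨b • M, smul_mem_GSpSet b hM, smul_conjClass b M⟩

theorem lambdaOrbit_eq_orbit (C : Set (Matrix (Fin g ⊕ Fin g) (Fin g ⊕ Fin g) (ZMod ℓ))) :
    lambdaOrbit ℓ g C = orbit (ZMod ℓ)ˣ C := by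
  ext C'
  simp only [lambdaOrbit, Set.image_smul, ← Units.smul_def]
  exact exists_congr fun b => eq_comm

theorem PGSpClasses_eq_image_orbit : PGSpClasses ℓ g = orbit (ZMod ℓ)ˣ '' GSpClasses ℓ g := by
  simp only [PGSpClasses, lambdaOrbit_eq_orbit]
  ext O
  simp [eq_comm]

theorem stabilizer_conjClass_le_rootsOfUnity
    {M : Matrix (Fin g ⊕ Fin g) (Fin g ⊕ Fin g) (ZMod ℓ)} (hM : M ∈ GSpSet ℓ g) :
    stabilizer (ZMod ℓ)ˣ (conjClass ℓ g M) ≤ rootsOfUnity (2 * g) (ZMod ℓ) := by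
  intro b hb
  rw [mem_stabilizer_iff, smul_conjClass] at hb
  obtain ⟨N, ⟨hN, -⟩, hconj⟩ : b • M ∈ conjClass ℓ g M := hb ▸ mem_conjClass_self _
  have hpow := pow_card_eq_one_of_smul_eq_conj ((isUnit_iff_isUnit_det M).mp hM.1) hN hconj
  rw [Fintype.card_sum, Fintype.card_fin, ← two_mul] at hpow
  rw [mem_rootsOfUnity, Units.ext_iff, Units.val_pow_eq_pow_val, Units.val_one]
  exact hpow

end

/-- The number of conjugacy classes of `PGSp_{2g}(F_ℓ)` is at most
`2g/(ℓ-1)` times the number of conjugacy classes of `GSp_{2g}(F_ℓ)` (stated in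
multiplied form), and more precisely every `Λ_{2g}(F_ℓ)`-orbit on the set of
conjugacy classes of `GSp_{2g}(F_ℓ)` has size at least `(ℓ-1)/(2g)`. -/
theorem stmt14 (ℓ g : ℕ) [Fact ℓ.Prime] (hg : 1 ≤ g) :
    (ℓ - 1) * (PGSpClasses ℓ g).ncard ≤ (2 * g) * (GSpClasses ℓ g).ncard ∧
    ∀ C ∈ GSpClasses ℓ g, ℓ - 1 ≤ (2 * g) * (lambdaOrbit ℓ g C).ncard := by
  have horbit : ∀ C ∈ GSpClasses ℓ g, ℓ - 1 ≤ (2 * g) * (lambdaOrbit ℓ g C).ncard := by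
    rintro C ⟨M, hM, rfl⟩
    have : NeZero (2 * g) := ⟨by omega⟩
    rw [lambdaOrbit_eq_orbit, ← ZMod.card_units ℓ, ← Nat.card_eq_fintype_card]
    exact (card_le_mul_ncard_orbit_of_stabilizer_le (stabilizer_conjClass_le_rootsOfUnity hM)).trans
      (Nat.mul_le_mul_right _ (card_rootsOfUnity _ _))
  refine ⟨?_, horbit⟩
  rw [PGSpClasses_eq_image_orbit]
  exact mul_ncard_image_orbit_le (Set.toFinite _) (fun b C hC => smul_mem_GSpClasses b hC)
    fun C hC => lambdaOrbit_eq_orbit C ▸ horbit C hC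
end
end
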